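/- arXiv:2505.04987 — 8 statements merged into one kernel-verified Lean document; each statement's English description precedes it below -/
import Mathlib

section
/- Let (M,J,∇) be a special complex manifold, i.e. J is a complex structure and ∇ is a torsion-free flat connection such that A := ∇J is symmetric. Then the connection D := ∇ - (1/2)J∘A is torsion-free and complex (DJ = 0), and its curvature is R^D = -(1/4)[A,A], where [A,A]_{X,Y} := [A_X, A_Y] denotes the commutator of the endomorphisms A_X and A_Y. -/
/-! Statement 0: For a special complex manifold (M,J,∇) (modelled on the Lie algebra of
vector fields `V`), the connection `D = ∇ - (1/2) J ∘ A` (with `A = ∇J`) is torsion-free,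
complex (`DJ = 0`), and its curvature is `R^D = -(1/4)[A,A]`. -/

section
variable {V : Type*} [LieRing V] [LieAlgebra ℝ V]

/-- Torsion-freeness of a connection on vector fields. -/
def IsTorsionFree (D : V → V → V) : Prop := ∀ X Y : V, D X Y - D Y X = ⁅X, Y⁆

/-- Curvature of a connection on vector fields. -/
def curvOf (D : V → V → V) (X Y Z : V) : V := D X (D Y Z) - D Y (D X Z) - D ⁅X, Y⁆ Z

theorem special_complex_connection_properties
    (nabla : V → V → V) (J : V →ₗ[ℝ] V)
    (hlin1 : ∀ (r : ℝ) (X Y Z : V), nabla (r • X + Y) Z = r • nabla X Z + nabla Y Z)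
    (hlin2 : ∀ (r : ℝ) (X Y Z : V), nabla X (r • Y + Z) = r • nabla X Y + nabla X Z)
    (hJ : ∀ X : V, J (J X) = -X)
    (hTF : IsTorsionFree nabla)
    (hflat : ∀ X Y Z : V, curvOf nabla X Y Z = 0)
    (A : V → V → V) (hA : ∀ X Y : V, A X Y = nabla X (J Y) - J (nabla X Y))
    (hAsym : ∀ X Y : V, A X Y = A Y X)
    (D : V → V → V) (hD : ∀ X Y : V, D X Y = nabla X Y - (1/2 : ℝ) • J (A X Y)) :
    IsTorsionFree D ∧ (∀ X Y : V, D X (J Y) = J (D X Y)) ∧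
      (∀ X Y Z : V, curvOf D X Y Z = -((1/4 : ℝ) • (A X (A Y Z) - A Y (A X Z)))) := by

  -- `nabla` is additive and homogeneous in the second slot
  have h0 : ∀ X : V, nabla X 0 = 0 := by
    intro X
    have h := hlin2 1 X 0 0
    simp only [one_smul, add_zero] at h
    exact right_eq_add.mp h
  have hsmul : ∀ (r : ℝ) (X Y : V), nabla X (r • Y) = r • nabla X Y := by
    intro r X Y
    have h := hlin2 r X Y 0
    simpa [h0] using h
  have hadd : ∀ X Y Z : V, nabla X (Y + Z) = nabla X Y + nabla X Z := by
    intro X Y Z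
    have h := hlin2 1 X Y Z
    simpa using h
  have hneg : ∀ X Y : V, nabla X (-Y) = -nabla X Y := by
    intro X Y
    have h := hsmul (-1) X Y
    simpa using h
  have hsub : ∀ X Y Z : V, nabla X (Y - Z) = nabla X Y - nabla X Z := by
    intro X Y Z
    rw [sub_eq_add_neg, hadd, hneg, sub_eq_add_neg]
  -- covariant derivative of J
  have hnJ : ∀ X W : V, nabla X (J W) = A X W + J (nabla X W) := by
    intro X W
    rw [hA]; abel
  -- A anticommutes with J
  have hAJ : ∀ X Y : V, A X (J Y) = -J (A X Y) := by
    intro X Y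
    rw [hA, hJ, hneg, hnJ, map_add, hJ]
    abel
  -- A is additive/homogeneous in the second slot
  have hAsmul2 : ∀ (r : ℝ) (X Y : V), A X (r • Y) = r • A X Y := by
    intro r X Y
    simp only [hA, hsmul, map_smul, smul_sub]
  have hAsub2 : ∀ X Y Z : V, A X (Y - Z) = A X Y - A X Z := by
    intro X Y Z
    simp only [hA, hsub, map_sub]; abel
  -- key identity for D X (D Y Z)
  have key : ∀ X Y Z : V, D X (D Y Z) =
      (1/2 : ℝ) • nabla X (nabla Y Z) - (1/4 : ℝ) • A X (A Y Z)
        - (1/2 : ℝ) • J (nabla X (nabla Y (J Z))) := by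
    intro X Y Z
    have e1 : nabla X (A Y Z)
        = nabla X (nabla Y (J Z)) - A X (nabla Y Z) - J (nabla X (nabla Y Z)) := by
      rw [hA Y Z, hsub, hnJ X (nabla Y Z)]; abel
    rw [hD X, hD Y, hsub, hsmul, hnJ X (A Y Z), e1, hAsub2, hAsmul2, hAJ]
    simp only [map_sub, map_add, map_smul, map_neg, hJ]
    module
  refine ⟨?_, ?_, ?_⟩
  · intro X Y
    rw [hD, hD, hAsym Y X, ← hTF X Y]
    abel
  · intro X Y
    rw [hD, hD, hnJ, hAJ, map_neg, hJ, map_sub, map_smul, hJ]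
    module
  · intro X Y Z
    have hf1 := hflat X Y Z
    have hf2 := hflat X Y (J Z)
    unfold curvOf at hf1 hf2 ⊢
    have f1 : nabla ⁅X, Y⁆ Z = nabla X (nabla Y Z) - nabla Y (nabla X Z) :=
      (sub_eq_zero.mp hf1).symm
    have f2 : nabla ⁅X, Y⁆ (J Z) = nabla X (nabla Y (J Z)) - nabla Y (nabla X (J Z)) :=
      (sub_eq_zero.mp hf2).symm
    rw [key X Y Z, key Y X Z, hD ⁅X, Y⁆ Z, hA ⁅X, Y⁆ Z, f1, f2]
    simp only [map_sub, map_add, map_smul, map_neg, hJ]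
    module

end
end

section
/- Let (M,J,∇) be a special complex manifold with A = ∇J and D = ∇ - (1/2)JA. Then d^D A = 0, i.e. the exterior covariant derivative of the TM-valued 1-form X ↦ A_X with respect to D vanishes: (D_X A)_Y Z - (D_Y A)_X Z = 0 for all vector fields X, Y, Z. -/
/-! Statement 1: For a special complex manifold, `d^D A = 0`, i.e. the exterior covariant
derivative of the `End(TM)`-valued 1-form `A = ∇J` with respect to `D = ∇ - (1/2)JA`
vanishes: `(D_X A)_Y Z - (D_Y A)_X Z = 0`. -/

section
variable {V : Type*} [LieRing V] [LieAlgebra ℝ V]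

theorem special_complex_dDA_zero
    (nabla : V → V → V) (J : V →ₗ[ℝ] V)
    (hlin1 : ∀ (r : ℝ) (X Y Z : V), nabla (r • X + Y) Z = r • nabla X Z + nabla Y Z)
    (hlin2 : ∀ (r : ℝ) (X Y Z : V), nabla X (r • Y + Z) = r • nabla X Y + nabla X Z)
    (hJ : ∀ X : V, J (J X) = -X)
    (hTF : IsTorsionFree nabla)
    (hflat : ∀ X Y Z : V, curvOf nabla X Y Z = 0)
    (A : V → V → V) (hA : ∀ X Y : V, A X Y = nabla X (J Y) - J (nabla X Y))
    (hAsym : ∀ X Y : V, A X Y = A Y X)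
    (D : V → V → V) (hD : ∀ X Y : V, D X Y = nabla X Y - (1/2 : ℝ) • J (A X Y)) :
    ∀ X Y Z : V,
      (D X (A Y Z) - A (D X Y) Z - A Y (D X Z))
        - (D Y (A X Z) - A (D Y X) Z - A X (D Y Z)) = 0 := by
  -- linearity in the second slot
  have nadd2 : ∀ X Y Z : V, nabla X (Y + Z) = nabla X Y + nabla X Z := by
    intro X Y Z; have := hlin2 1 X Y Z; simpa using this
  have nzero2 : ∀ X : V, nabla X 0 = 0 := by
    intro X; have h := nadd2 X 0 0; simp at h; exact h
  have nsmul2 : ∀ (r : ℝ) (X Y : V), nabla X (r • Y) = r • nabla X Y := by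
    intro r X Y; have := hlin2 r X Y 0; simpa [nzero2] using this
  have nsub2 : ∀ X Y Z : V, nabla X (Y - Z) = nabla X Y - nabla X Z := by
    intro X Y Z
    have h : Y - Z = (-1 : ℝ) • Z + Y := by module
    rw [h, hlin2]; module
  have nneg2 : ∀ X Y : V, nabla X (-Y) = - nabla X Y := by
    intro X Y; have := nsub2 X 0 Y; simpa [nzero2] using this
  -- linearity in the first slot
  have nadd1 : ∀ X Y Z : V, nabla (X + Y) Z = nabla X Z + nabla Y Z := by
    intro X Y Z; have := hlin1 1 X Y Z; simpa using this
  have nsub1 : ∀ X Y Z : V, nabla (X - Y) Z = nabla X Z - nabla Y Z := by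
    intro X Y Z
    have h : X - Y = (-1 : ℝ) • Y + X := by module
    rw [h, hlin1]; module
  have nzero1 : ∀ Y : V, nabla (0 : V) Y = 0 := by
    intro Y; have h := nadd1 0 0 Y; simp at h; exact h
  have nsmul1 : ∀ (r : ℝ) (X Y : V), nabla (r • X) Y = r • nabla X Y := by
    intro r X Y; have := hlin1 r X 0 Y; simpa [nzero1] using this
  -- flatness combined with torsion-freeness
  have h2 : ∀ X Y W : V, nabla X (nabla Y W) - nabla Y (nabla X W)
      - nabla (nabla X Y) W + nabla (nabla Y X) W = 0 := by
    intro X Y W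
    have h := hflat X Y W
    unfold curvOf at h
    rw [← hTF X Y, nsub1] at h
    linear_combination (norm := module) h
  -- A anticommutes with J
  have hAJ : ∀ X Y : V, A X (J Y) = - J (A X Y) := by
    intro X Y
    simp only [hA, map_sub, hJ Y, hJ (nabla X Y), nneg2]
    module
  have hAJ1 : ∀ X Y : V, A (J X) Y = - J (A X Y) := by
    intro X Y; rw [hAsym, hAJ, hAsym]
  -- A is linear in each slot
  have hAsub2 : ∀ X Y Z : V, A X (Y - Z) = A X Y - A X Z := by
    intro X Y Z; simp only [hA, map_sub, nsub2]; module
  have hAsmul2 : ∀ (r : ℝ) (X Y : V), A X (r • Y) = r • A X Y := by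
    intro r X Y; simp only [hA, map_smul, nsmul2]; module
  have hAsub1 : ∀ X Y Z : V, A (X - Y) Z = A X Z - A Y Z := by
    intro X Y Z; rw [hAsym, hAsub2, hAsym, hAsym Y]
  have hAsmul1 : ∀ (r : ℝ) (X Y : V), A (r • X) Y = r • A X Y := by
    intro r X Y; rw [hAsym, hAsmul2, hAsym]
  -- d^nabla A = 0
  have hdA : ∀ X Y Z : V,
      nabla X (A Y Z) - A (nabla X Y) Z - A Y (nabla X Z)
        - nabla Y (A X Z) + A (nabla Y X) Z + A X (nabla Y Z) = 0 := by
    intro X Y Z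
    have hj := congrArg J (h2 X Y Z)
    simp only [map_sub, map_add, map_zero] at hj
    simp only [hA, nsub2, map_sub]
    linear_combination (norm := module) h2 X Y (J Z) - hj
  intro X Y Z
  simp only [hD, hAsub1, hAsmul1, hAJ1, hAsub2, hAsmul2, hAJ]
  rw [hAsym Y X]
  linear_combination (norm := module) hdA X Y Z

end
end

section
/- For a complex manifold (M,J), there is a bijection between the set S of special connections ∇ (torsion-free, flat, with ∇J symmetric) and the set C of pairs (D,S) where D is a torsion-free complex connection, S is a symmetric (1,2)-tensor anti-commuting with J, R^D = -[S,S], and d^D S = 0. The bijection sends ∇ to (∇ + S, S) with S = -(1/2)J(∇J), and conversely (D,S) to ∇ = D - S. -/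
/-! Statement 2: For a complex manifold (M,J), the set of special connections is in natural
bijection with the set of pairs (D,S) where D is a torsion-free complex connection, S a
symmetric (1,2)-tensor anti-commuting with J, `R^D = -[S,S]` and `d^D S = 0`.  The bijection
is `∇ ↦ (∇ + S, S)` with `S = -(1/2)J(∇J)`, with inverse `(D,S) ↦ D - S`. -/

section
variable {V : Type*} [LieRing V] [LieAlgebra ℝ V]

/-- A special connection: torsion-free, flat, with `∇J` symmetric (and bilinear over ℝ). -/
def IsSpecialConn (J : V →ₗ[ℝ] V) (nabla : V → V → V) : Prop :=
  (∀ (r : ℝ) (X Y Z : V), nabla (r • X + Y) Z = r • nabla X Z + nabla Y Z) ∧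
  (∀ (r : ℝ) (X Y Z : V), nabla X (r • Y + Z) = r • nabla X Y + nabla X Z) ∧
  IsTorsionFree nabla ∧ (∀ X Y Z : V, curvOf nabla X Y Z = 0) ∧
  (∀ X Y : V, nabla X (J Y) - J (nabla X Y) = nabla Y (J X) - J (nabla Y X))

/-- Membership in the set `C`: `p.1` is a torsion-free complex connection, `p.2` a symmetric
(1,2)-tensor anti-commuting with `J`, with `R^D = -[S,S]` and `d^D S = 0`. -/
def InCSet (J : V →ₗ[ℝ] V) (p : (V → V → V) × (V → V → V)) : Prop :=
  (∀ (r : ℝ) (X Y Z : V), p.1 (r • X + Y) Z = r • p.1 X Z + p.1 Y Z) ∧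
  (∀ (r : ℝ) (X Y Z : V), p.1 X (r • Y + Z) = r • p.1 X Y + p.1 X Z) ∧
  (∀ (r : ℝ) (X Y Z : V), p.2 (r • X + Y) Z = r • p.2 X Z + p.2 Y Z) ∧
  (∀ (r : ℝ) (X Y Z : V), p.2 X (r • Y + Z) = r • p.2 X Y + p.2 X Z) ∧
  IsTorsionFree p.1 ∧ (∀ X Y : V, p.1 X (J Y) = J (p.1 X Y)) ∧
  (∀ X Y : V, p.2 X Y = p.2 Y X) ∧ (∀ X Y : V, p.2 X (J Y) = -J (p.2 X Y)) ∧
  (∀ X Y Z : V, curvOf p.1 X Y Z = -(p.2 X (p.2 Y Z) - p.2 Y (p.2 X Z))) ∧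
  (∀ X Y Z : V,
    (p.1 X (p.2 Y Z) - p.2 (p.1 X Y) Z - p.2 Y (p.1 X Z))
      - (p.1 Y (p.2 X Z) - p.2 (p.1 Y X) Z - p.2 X (p.1 Y Z)) = 0)

namespace SpecialConnAux


theorem s1_zero {f : V → V → V}
    (h : ∀ (r : ℝ) (X Y Z : V), f (r • X + Y) Z = r • f X Z + f Y Z) (Z : V) : f 0 Z = 0 := by
  have h0 := h 1 0 0 Z
  simp only [one_smul, add_zero] at h0
  exact add_eq_left.mp h0.symm

theorem s1_add {f : V → V → V}
    (h : ∀ (r : ℝ) (X Y Z : V), f (r • X + Y) Z = r • f X Z + f Y Z) (X Y Z : V) :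
    f (X + Y) Z = f X Z + f Y Z := by
  have h0 := h 1 X Y Z; simpa using h0

theorem s1_smul {f : V → V → V}
    (h : ∀ (r : ℝ) (X Y Z : V), f (r • X + Y) Z = r • f X Z + f Y Z) (r : ℝ) (X Z : V) :
    f (r • X) Z = r • f X Z := by
  have h0 := h r X 0 Z
  simpa [s1_zero h] using h0

theorem s1_sub {f : V → V → V}
    (h : ∀ (r : ℝ) (X Y Z : V), f (r • X + Y) Z = r • f X Z + f Y Z) (X Y Z : V) :
    f (X - Y) Z = f X Z - f Y Z := by
  have h0 := h (-1) Y X Z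
  simp only [neg_one_smul, neg_add_eq_sub] at h0
  exact h0

theorem s1_neg {f : V → V → V}
    (h : ∀ (r : ℝ) (X Y Z : V), f (r • X + Y) Z = r • f X Z + f Y Z) (X Z : V) :
    f (-X) Z = -f X Z := by
  rw [← neg_one_smul ℝ X, s1_smul h, neg_one_smul]

theorem s2_zero {f : V → V → V}
    (h : ∀ (r : ℝ) (X Y Z : V), f X (r • Y + Z) = r • f X Y + f X Z) (X : V) : f X 0 = 0 :=
  s1_zero (f := fun a b => f b a) (fun r A B C => h r C A B) X

theorem s2_add {f : V → V → V}
    (h : ∀ (r : ℝ) (X Y Z : V), f X (r • Y + Z) = r • f X Y + f X Z) (X Y Z : V) :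
    f X (Y + Z) = f X Y + f X Z :=
  s1_add (f := fun a b => f b a) (fun r A B C => h r C A B) Y Z X

theorem s2_smul {f : V → V → V}
    (h : ∀ (r : ℝ) (X Y Z : V), f X (r • Y + Z) = r • f X Y + f X Z) (r : ℝ) (X Y : V) :
    f X (r • Y) = r • f X Y :=
  s1_smul (f := fun a b => f b a) (fun r A B C => h r C A B) r Y X

theorem s2_sub {f : V → V → V}
    (h : ∀ (r : ℝ) (X Y Z : V), f X (r • Y + Z) = r • f X Y + f X Z) (X Y Z : V) :
    f X (Y - Z) = f X Y - f X Z :=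
  s1_sub (f := fun a b => f b a) (fun r A B C => h r C A B) Y Z X

theorem s2_neg {f : V → V → V}
    (h : ∀ (r : ℝ) (X Y Z : V), f X (r • Y + Z) = r • f X Y + f X Z) (X Y : V) :
    f X (-Y) = -f X Y :=
  s1_neg (f := fun a b => f b a) (fun r A B C => h r C A B) Y X

theorem curv_gauge (D T : V → V → V)
    (hD2 : ∀ (r : ℝ) (X Y Z : V), D X (r • Y + Z) = r • D X Y + D X Z)
    (hT1 : ∀ (r : ℝ) (X Y Z : V), T (r • X + Y) Z = r • T X Z + T Y Z)
    (hT2 : ∀ (r : ℝ) (X Y Z : V), T X (r • Y + Z) = r • T X Y + T X Z)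
    (htf : IsTorsionFree D) (X Y Z : V) :
    curvOf (fun X Y => D X Y + T X Y) X Y Z =
      curvOf D X Y Z
      + ((D X (T Y Z) - T (D X Y) Z - T Y (D X Z))
         - (D Y (T X Z) - T (D Y X) Z - T X (D Y Z)))
      + (T X (T Y Z) - T Y (T X Z)) := by
  have e3 : T ⁅X, Y⁆ Z = T (D X Y) Z - T (D Y X) Z := by
    rw [← htf X Y, s1_sub hT1]
  simp only [curvOf]
  rw [s2_add hD2, s2_add hD2, s2_add hT2, s2_add hT2, e3]
  abel

theorem fwd_mem (J : V →ₗ[ℝ] V) (hJ : ∀ X : V, J (J X) = -X)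
    (nabla A S : V → V → V)
    (h1 : ∀ (r : ℝ) (X Y Z : V), nabla (r • X + Y) Z = r • nabla X Z + nabla Y Z)
    (h2 : ∀ (r : ℝ) (X Y Z : V), nabla X (r • Y + Z) = r • nabla X Y + nabla X Z)
    (htf : IsTorsionFree nabla)
    (hflat : ∀ X Y Z : V, curvOf nabla X Y Z = 0)
    (hsym : ∀ X Y : V, nabla X (J Y) - J (nabla X Y) = nabla Y (J X) - J (nabla Y X))
    (hA : ∀ X Y, A X Y = nabla X (J Y) - J (nabla X Y))
    (hS : ∀ X Y, S X Y = -((1/2 : ℝ) • J (A X Y))) :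
    InCSet J (fun X Y => nabla X Y + S X Y, S) := by
  have hA1 : ∀ (r : ℝ) (X Y Z : V), A (r • X + Y) Z = r • A X Z + A Y Z := by
    intro r X Y Z
    rw [hA, hA, hA, h1, h1]
    simp only [map_add, map_smul]
    module
  have hA2 : ∀ (r : ℝ) (X Y Z : V), A X (r • Y + Z) = r • A X Y + A X Z := by
    intro r X Y Z
    rw [hA, hA, hA, map_add, map_smul, h2, h2]
    simp only [map_add, map_smul]
    module
  have hAsym : ∀ X Y, A X Y = A Y X := by
    intro X Y; rw [hA, hA]; exact hsym X Y
  have hAJ : ∀ X Y, A X (J Y) = -(J (A X Y)) := by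
    intro X Y
    rw [hA, hA, hJ Y, s2_neg h2]
    simp only [map_sub]
    rw [hJ (nabla X Y)]
    abel
  have hS1 : ∀ (r : ℝ) (X Y Z : V), S (r • X + Y) Z = r • S X Z + S Y Z := by
    intro r X Y Z
    rw [hS, hS, hS, hA1]
    simp only [map_add, map_smul]
    module
  have hS2 : ∀ (r : ℝ) (X Y Z : V), S X (r • Y + Z) = r • S X Y + S X Z := by
    intro r X Y Z
    rw [hS, hS, hS, hA2]
    simp only [map_add, map_smul]
    module
  have hSsym : ∀ X Y, S X Y = S Y X := by
    intro X Y; rw [hS, hS, hAsym X Y]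
  have hSJ : ∀ X Y, S X (J Y) = -(J (S X Y)) := by
    intro X Y
    rw [hS, hS, hAJ]
    simp only [map_neg, map_smul, hJ]
    module
  have hflat' : ∀ X Y W : V, nabla X (nabla Y W) - nabla Y (nabla X W) = nabla ⁅X, Y⁆ W := by
    intro X Y W
    have h0 := hflat X Y W
    unfold curvOf at h0
    exact sub_eq_zero.mp h0
  have hnablaJ : ∀ X W, nabla X (J W) = A X W + J (nabla X W) := by
    intro X W; rw [hA]; abel
  have hLA : ∀ X Y Z : V,
      (nabla X (A Y Z) - A (nabla X Y) Z - A Y (nabla X Z))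
        - (nabla Y (A X Z) - A (nabla Y X) Z - A X (nabla Y Z)) = 0 := by
    intro X Y Z
    have e1 : nabla X (A Y Z)
        = nabla X (nabla Y (J Z)) - (A X (nabla Y Z) + J (nabla X (nabla Y Z))) := by
      rw [hA Y Z, s2_sub h2, hnablaJ X (nabla Y Z)]
    have e2 : nabla Y (A X Z)
        = nabla Y (nabla X (J Z)) - (A Y (nabla X Z) + J (nabla Y (nabla X Z))) := by
      rw [hA X Z, s2_sub h2, hnablaJ Y (nabla X Z)]
    rw [e1, e2, hA (nabla X Y) Z, hA (nabla Y X) Z]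
    have g1 : nabla X (nabla Y (J Z)) = nabla ⁅X, Y⁆ (J Z) + nabla Y (nabla X (J Z)) := by
      rw [← hflat' X Y (J Z)]; abel
    have g2 : J (nabla X (nabla Y Z)) = J (nabla ⁅X, Y⁆ Z) + J (nabla Y (nabla X Z)) := by
      rw [← hflat' X Y Z]; simp only [map_sub]; abel
    have g3 : nabla (nabla X Y) (J Z) = nabla ⁅X, Y⁆ (J Z) + nabla (nabla Y X) (J Z) := by
      rw [← htf X Y, s1_sub h1]; abel
    have g4 : J (nabla (nabla X Y) Z) = J (nabla ⁅X, Y⁆ Z) + J (nabla (nabla Y X) Z) := by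
      rw [← htf X Y, s1_sub h1]; simp only [map_sub]; abel
    rw [g1, g2, g3, g4]
    abel
  have F1 : ∀ X Y Z : V,
      (nabla X (S Y Z) - S (nabla X Y) Z - S Y (nabla X Z))
        - (nabla Y (S X Z) - S (nabla Y X) Z - S X (nabla Y Z))
      = -((1/2 : ℝ) • (A X (A Y Z) - A Y (A X Z))) := by
    intro X Y Z
    have e1 : nabla X (S Y Z)
        = -((1/2 : ℝ) • (A X (A Y Z) + J (nabla X (A Y Z)))) := by
      rw [hS, s2_neg h2, s2_smul h2, hnablaJ X (A Y Z)]
    have e2 : nabla Y (S X Z)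
        = -((1/2 : ℝ) • (A Y (A X Z) + J (nabla Y (A X Z)))) := by
      rw [hS, s2_neg h2, s2_smul h2, hnablaJ Y (A X Z)]
    have hj0 := congrArg (fun w => J w) (hLA X Y Z)
    simp only [map_sub, map_zero] at hj0
    rw [e1, e2, hS (nabla X Y) Z, hS (nabla Y X) Z, hS Y (nabla X Z), hS X (nabla Y Z)]
    linear_combination (norm := module) (-(1/2 : ℝ)) • hj0
  have F2 : ∀ X Y Z : V, S X (S Y Z) = (1/4 : ℝ) • A X (A Y Z) := by
    intro X Y Z
    rw [hS Y Z, s2_neg hS2, s2_smul hS2, hSJ, hS X (A Y Z)]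
    simp only [map_neg, map_smul, hJ]
    module
  refine ⟨?_, ?_, hS1, hS2, ?_, ?_, hSsym, hSJ, ?_, ?_⟩
  · intro r X Y Z
    dsimp only
    rw [h1, hS1]; module
  · intro r X Y Z
    dsimp only
    rw [h2, hS2]; module
  · intro X Y
    dsimp only
    rw [hSsym X Y, ← htf X Y]; abel
  · intro X Y
    dsimp only
    rw [hSJ X Y, hS X Y, hA X Y]
    simp only [map_add, map_sub, map_neg, map_smul, hJ]
    module
  · intro X Y Z
    dsimp only
    rw [curv_gauge nabla S h2 hS1 hS2 htf X Y Z, hflat X Y Z, F1 X Y Z, F2 X Y Z, F2 Y X Z]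
    module
  · intro X Y Z
    dsimp only
    rw [s1_add hS1, s1_add hS1, s2_add hS2, s2_add hS2]
    have hq : S (S X Y) Z = S (S Y X) Z := by rw [hSsym X Y]
    linear_combination (norm := module) F1 X Y Z + (2 : ℝ) • F2 X Y Z - (2 : ℝ) • F2 Y X Z - hq


theorem bwd_mem (J : V →ₗ[ℝ] V) (hJ : ∀ X : V, J (J X) = -X)
    (D S : V → V → V)
    (hd1 : ∀ (r : ℝ) (X Y Z : V), D (r • X + Y) Z = r • D X Z + D Y Z)
    (hd2 : ∀ (r : ℝ) (X Y Z : V), D X (r • Y + Z) = r • D X Y + D X Z)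
    (hs1 : ∀ (r : ℝ) (X Y Z : V), S (r • X + Y) Z = r • S X Z + S Y Z)
    (hs2 : ∀ (r : ℝ) (X Y Z : V), S X (r • Y + Z) = r • S X Y + S X Z)
    (htf : IsTorsionFree D)
    (hcx : ∀ X Y : V, D X (J Y) = J (D X Y))
    (hssym : ∀ X Y : V, S X Y = S Y X)
    (hsJ : ∀ X Y : V, S X (J Y) = -J (S X Y))
    (hcurv : ∀ X Y Z : V, curvOf D X Y Z = -(S X (S Y Z) - S Y (S X Z)))
    (hdS : ∀ X Y Z : V,
      (D X (S Y Z) - S (D X Y) Z - S Y (D X Z))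
        - (D Y (S X Z) - S (D Y X) Z - S X (D Y Z)) = 0) :
    IsSpecialConn J (fun X Y => D X Y - S X Y) := by
  refine ⟨?_, ?_, ?_, ?_, ?_⟩
  · intro r X Y Z
    dsimp only
    rw [hd1, hs1]; module
  · intro r X Y Z
    dsimp only
    rw [hd2, hs2]; module
  · intro X Y
    dsimp only
    rw [hssym X Y, ← htf X Y]; abel
  · intro X Y Z
    have heq : (fun X Y => D X Y - S X Y) = (fun X Y => D X Y + (fun X Y => -S X Y) X Y) := by
      funext a b; dsimp only; rw [sub_eq_add_neg]
    have ht1 : ∀ (r : ℝ) (X Y Z : V),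
        (fun X Y => -S X Y) (r • X + Y) Z = r • (fun X Y => -S X Y) X Z + (fun X Y => -S X Y) Y Z := by
      intro r X Y Z; dsimp only; rw [hs1]; module
    have ht2 : ∀ (r : ℝ) (X Y Z : V),
        (fun X Y => -S X Y) X (r • Y + Z) = r • (fun X Y => -S X Y) X Y + (fun X Y => -S X Y) X Z := by
      intro r X Y Z; dsimp only; rw [hs2]; module
    rw [heq, curv_gauge D (fun X Y => -S X Y) hd2 ht1 ht2 htf X Y Z, hcurv X Y Z]
    have d2neg : ∀ (X w : V), D X (-w) = -D X w := fun X w => s2_neg hd2 X w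
    have s2neg : ∀ (X w : V), S X (-w) = -S X w := fun X w => s2_neg hs2 X w
    simp only [d2neg, s2neg]
    linear_combination (norm := module) -(hdS X Y Z)
  · intro X Y
    dsimp only
    rw [hcx X Y, hcx Y X, hsJ X Y, hsJ Y X, map_sub, map_sub, hssym X Y]
    abel

end SpecialConnAux

theorem special_connections_bijection (J : V →ₗ[ℝ] V) (hJ : ∀ X : V, J (J X) = -X) :
    ∃ e : {nabla : V → V → V // IsSpecialConn J nabla} ≃
          {p : (V → V → V) × (V → V → V) // InCSet J p},
      (∀ nh : {nabla : V → V → V // IsSpecialConn J nabla},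
        (e nh).1 =
          (fun X Y => nh.1 X Y + -((1/2 : ℝ) • J (nh.1 X (J Y) - J (nh.1 X Y))),
           fun X Y => -((1/2 : ℝ) • J (nh.1 X (J Y) - J (nh.1 X Y))))) ∧
      (∀ ph : {p : (V → V → V) × (V → V → V) // InCSet J p},
        (e.symm ph).1 = fun X Y => ph.1.1 X Y - ph.1.2 X Y) := by
  refine ⟨⟨fun nh =>
      ⟨(fun X Y => nh.1 X Y + -((1/2 : ℝ) • J (nh.1 X (J Y) - J (nh.1 X Y))),
        fun X Y => -((1/2 : ℝ) • J (nh.1 X (J Y) - J (nh.1 X Y)))),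
       SpecialConnAux.fwd_mem J hJ nh.1
         (fun X Y => nh.1 X (J Y) - J (nh.1 X Y))
         (fun X Y => -((1/2 : ℝ) • J (nh.1 X (J Y) - J (nh.1 X Y))))
         nh.2.1 nh.2.2.1 nh.2.2.2.1 nh.2.2.2.2.1 nh.2.2.2.2.2
         (fun _ _ => rfl) (fun _ _ => rfl)⟩,
    fun ph => ⟨fun X Y => ph.1.1 X Y - ph.1.2 X Y,
       SpecialConnAux.bwd_mem J hJ ph.1.1 ph.1.2
         ph.2.1 ph.2.2.1 ph.2.2.2.1 ph.2.2.2.2.1 ph.2.2.2.2.2.1 ph.2.2.2.2.2.2.1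
         ph.2.2.2.2.2.2.2.1 ph.2.2.2.2.2.2.2.2.1 ph.2.2.2.2.2.2.2.2.2.1
         ph.2.2.2.2.2.2.2.2.2.2⟩,
    ?_, ?_⟩, fun nh => rfl, fun ph => rfl⟩
  · intro nh
    apply Subtype.ext
    funext X Y
    dsimp only
    abel
  · intro ph
    apply Subtype.ext
    have hcx := ph.2.2.2.2.2.2.1
    have hssym := ph.2.2.2.2.2.2.2.1
    have hsJ := ph.2.2.2.2.2.2.2.2.1
    have hkey : ∀ X Y : V,
        -((1/2 : ℝ) • J ((ph.1.1 X (J Y) - ph.1.2 X (J Y)) - J (ph.1.1 X Y - ph.1.2 X Y)))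
          = ph.1.2 X Y := by
      intro X Y
      rw [hcx X Y, hsJ X Y, map_sub J (ph.1.1 X Y) (ph.1.2 X Y)]
      simp only [map_sub, map_neg, hJ]
      module
    apply Prod.ext
    · funext X Y
      dsimp only
      rw [hkey X Y]
      abel
    · funext X Y
      dsimp only
      exact hkey X Y

end
end

section
/- Let (M,J,∇,ξ) be a conical special complex manifold with A = ∇J. Then the Lie derivatives satisfy L_{Jξ}∇ = A, L_{Jξ}A = -2JA, and L_{Jξ}(JA) = 2A. -/
/-! Statement 4: On a conical special complex manifold (M,J,∇,ξ) with `A = ∇J`: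
`L_{Jξ}∇ = A`, `L_{Jξ}A = -2JA` and `L_{Jξ}(JA) = 2A`. -/

section
variable {V : Type*} [LieRing V] [LieAlgebra ℝ V]

theorem conical_Lie_derivatives
    (nabla : V → V → V) (J : V →ₗ[ℝ] V) (xi : V)
    (hlin1 : ∀ (r : ℝ) (X Y Z : V), nabla (r • X + Y) Z = r • nabla X Z + nabla Y Z)
    (hlin2 : ∀ (r : ℝ) (X Y Z : V), nabla X (r • Y + Z) = r • nabla X Y + nabla X Z)
    (hJ : ∀ X : V, J (J X) = -X)
    (hTF : IsTorsionFree nabla)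
    (hflat : ∀ X Y Z : V, curvOf nabla X Y Z = 0)
    (A : V → V → V) (hA : ∀ X Y : V, A X Y = nabla X (J Y) - J (nabla X Y))
    (hAsym : ∀ X Y : V, A X Y = A Y X)
    (hxi : ∀ X : V, nabla X xi = X)
    (hLieJ : ∀ X : V, ⁅xi, J X⁆ = J ⁅xi, X⁆) :
    (∀ X Y : V, ⁅J xi, nabla X Y⁆ - nabla ⁅J xi, X⁆ Y - nabla X ⁅J xi, Y⁆ = A X Y) ∧
    (∀ X Y : V, ⁅J xi, A X Y⁆ - A ⁅J xi, X⁆ Y - A X ⁅J xi, Y⁆ = -((2 : ℝ) • J (A X Y))) ∧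
    (∀ X Y : V, ⁅J xi, J (A X Y)⁆ - J (A ⁅J xi, X⁆ Y) - J (A X ⁅J xi, Y⁆) = (2 : ℝ) • A X Y) := by
  -- basic linearity consequences
  have hzero2 : ∀ X : V, nabla X 0 = 0 := by
    intro X
    have h := hlin2 1 X 0 0
    simp only [one_smul, add_zero] at h
    exact (right_eq_add.mp h)
  have hzero1 : ∀ Y : V, nabla 0 Y = 0 := by
    intro Y
    have h := hlin1 1 0 0 Y
    simp only [one_smul, add_zero] at h
    exact (right_eq_add.mp h)
  have hsub2 : ∀ X Y Z : V, nabla X (Y - Z) = nabla X Y - nabla X Z := by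
    intro X Y Z
    have h := hlin2 (-1) X Z Y
    rw [neg_one_smul, neg_add_eq_sub, neg_one_smul, neg_add_eq_sub] at h
    exact h
  have hsub1 : ∀ X Y Z : V, nabla (X - Y) Z = nabla X Z - nabla Y Z := by
    intro X Y Z
    have h := hlin1 (-1) Y X Z
    rw [neg_one_smul, neg_add_eq_sub, neg_one_smul, neg_add_eq_sub] at h
    exact h
  have hneg2 : ∀ X Y : V, nabla X (-Y) = -(nabla X Y) := by
    intro X Y
    have h := hsub2 X 0 Y
    rw [zero_sub, hzero2, zero_sub] at h
    exact h
  have hbr : ∀ X Y : V, ⁅X, Y⁆ = nabla X Y - nabla Y X := fun X Y => (hTF X Y).symm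
  -- A ξ = 0
  have hAxi : ∀ X : V, A xi X = 0 := by
    intro X
    have h := hLieJ X
    rw [hbr, hbr, hxi, hxi, map_sub] at h
    have h' : nabla xi (J X) = J (nabla xi X) := sub_left_inj.mp h
    rw [hA, h', sub_self]
  have hAXxi : ∀ X : V, A X xi = 0 := fun X => (hAsym X xi).trans (hAxi X)
  -- ∇_X (Jξ) = J X
  have hnJxi : ∀ X : V, nabla X (J xi) = J X := by
    intro X
    have h := hA X xi
    rw [hAXxi, hxi] at h
    exact sub_eq_zero.mp h.symm
  -- A (Jξ) = 0
  have hAJxiX : ∀ X : V, A (J xi) X = 0 := by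
    intro X
    have h := hA X (J xi)
    rw [hJ, hneg2, hxi, hnJxi, hJ, sub_neg_eq_add, neg_add_cancel] at h
    exact (hAsym (J xi) X).trans h
  have hnBJZ : ∀ Z : V, nabla (J xi) (J Z) = J (nabla (J xi) Z) := by
    intro Z
    have h := hA (J xi) Z
    rw [hAJxiX] at h
    exact sub_eq_zero.mp h.symm
  -- A X (JY) = - J (A X Y)
  have hnJ : ∀ X Y : V, nabla X (J Y) = A X Y + J (nabla X Y) := by
    intro X Y
    have h := (hA X Y).symm
    exact sub_eq_iff_eq_add.mp h
  have hAJY : ∀ X Y : V, A X (J Y) = -(J (A X Y)) := by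
    intro X Y
    rw [hA, hJ, hneg2, hnJ, map_add, hJ]
    abel
  have hbrB : ∀ Z : V, ⁅J xi, Z⁆ = nabla (J xi) Z - J Z := by
    intro Z; rw [hbr, hnJxi]
  -- flatness rearranged
  have hflat' : ∀ X Z : V, nabla (J xi) (nabla X Z)
      = nabla X (nabla (J xi) Z) + nabla (nabla (J xi) X) Z - nabla (J X) Z := by
    intro X Z
    have h := hflat (J xi) X Z
    unfold curvOf at h
    rw [hbrB, hsub1, sub_sub, sub_eq_zero] at h
    rw [h]; abel
  -- Claim 1
  have h1 : ∀ X Y : V, ⁅J xi, nabla X Y⁆ - nabla ⁅J xi, X⁆ Y - nabla X ⁅J xi, Y⁆ = A X Y := by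
    intro X Y
    rw [hbrB, hbrB, hbrB, hsub1, hsub2, hflat' X Y, hA]
    abel
  -- A linearity in each slot (for subtraction)
  have hAsubL : ∀ X Y Z : V, A (X - Y) Z = A X Z - A Y Z := by
    intro X Y Z
    rw [hA, hA, hA, hsub1, hsub1, map_sub]
    abel
  have hAsubR : ∀ X Y Z : V, A X (Y - Z) = A X Y - A X Z := by
    intro X Y Z
    rw [hA, hA, hA, map_sub, hsub2, hsub2, map_sub]
    abel
  -- ∇_B (A X Y)
  have hnBA : ∀ X Y : V, nabla (J xi) (A X Y)
      = A X (nabla (J xi) Y) + A (nabla (J xi) X) Y - A (J X) Y := by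
    intro X Y
    rw [hA X Y, hsub2, hflat' X (J Y), hnBJZ, hnBJZ, hflat' X Y,
      map_sub, map_add, hnJ X (nabla (J xi) Y), hnJ (nabla (J xi) X) Y, hnJ (J X) Y,
      hA X (nabla (J xi) Y), hA (nabla (J xi) X) Y, hA (J X) Y]
    abel
  -- Claim 2
  have h2 : ∀ X Y : V, ⁅J xi, A X Y⁆ - A ⁅J xi, X⁆ Y - A X ⁅J xi, Y⁆
      = -((2 : ℝ) • J (A X Y)) := by
    intro X Y
    rw [hbrB, hbrB, hbrB, hAsubL, hAsubR, hnBA, hAJY, two_smul]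
    abel
  refine ⟨h1, h2, ?_⟩
  -- Claim 3
  intro X Y
  have hbrJ : ∀ Z : V, ⁅J xi, J Z⁆ = J ⁅J xi, Z⁆ := by
    intro Z; rw [hbrB, hbrB, hnBJZ, map_sub]
  calc ⁅J xi, J (A X Y)⁆ - J (A ⁅J xi, X⁆ Y) - J (A X ⁅J xi, Y⁆)
      = J (⁅J xi, A X Y⁆ - A ⁅J xi, X⁆ Y - A X ⁅J xi, Y⁆) := by
        rw [map_sub, map_sub, hbrJ]
    _ = J (-((2 : ℝ) • J (A X Y))) := by rw [h2]
    _ = (2 : ℝ) • A X Y := by rw [map_neg, map_smul, hJ, smul_neg, neg_neg]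

end
end

section
/- Let (N,J,D) be a 2-dimensional manifold with complex structure J and torsion-free complex connection D whose Ricci tensor is symmetric. Then for any unit vector u (with respect to a D-parallel metric g_Ω = Ω(·, J·) induced by a D-parallel volume form Ω): R^D_{u,Ju}u = -Ric^D(u,u)Ju, Ric^D(u,u) = Ric^D(Ju,Ju), and Ric^D(u,Ju) = Ric^D(Ju,u) = 0. Equivalently, R^D = Ric^D_J ⊗ J. -/
/-! Statement 10: On a surface with torsion-free complex connection whose Ricci tensor is
symmetric, `R^D_{u,Ju}u = -Ric^D(u,u)Ju`, `Ric^D(u,u) = Ric^D(Ju,Ju)`,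
`Ric^D(u,Ju) = Ric^D(Ju,u) = 0`, and `R^D = Ric^D_J ⊗ J`.  Modelled pointwise on a
2-dimensional tangent space with the algebraic curvature tensor `R`. -/

section
variable {V : Type*} [AddCommGroup V] [Module ℝ V] [FiniteDimensional ℝ V]

/-- The Ricci tensor `Ric(X,Y) = Tr (Z ↦ R Z X Y)` of an algebraic curvature tensor. -/
noncomputable def ricciOf (R : V →ₗ[ℝ] V →ₗ[ℝ] V →ₗ[ℝ] V) (X Y : V) : ℝ :=
  LinearMap.trace ℝ V ((R.flip X).flip Y)

theorem surface_curvature_identities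
    (hdim : Module.finrank ℝ V = 2)
    (J : Module.End ℝ V) (hJ : ∀ X : V, J (J X) = -X)
    (R : V →ₗ[ℝ] V →ₗ[ℝ] V →ₗ[ℝ] V)
    (hRalt : ∀ X Y : V, R X Y = -R Y X)
    (hbianchi : ∀ X Y Z : V, R X Y Z + R Y Z X + R Z X Y = 0)
    (hRJ : ∀ X Y Z : V, R X Y (J Z) = J (R X Y Z))          -- DJ = 0
    (hRicSym : ∀ X Y : V, ricciOf R X Y = ricciOf R Y X)
    (Ω : V →ₗ[ℝ] V →ₗ[ℝ] ℝ) (hΩ : ∀ X : V, Ω X X = 0)       -- D-parallel volume form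
    (u : V) (hu : Ω u (J u) = 1) :                            -- unit vector for g_Ω
    R u (J u) u = -(ricciOf R u u) • J u ∧
    ricciOf R u u = ricciOf R (J u) (J u) ∧
    ricciOf R u (J u) = 0 ∧ ricciOf R (J u) u = 0 ∧
    (∀ X Y Z : V, R X Y Z = ricciOf R X (J Y) • J Z) := by
  have hRself : ∀ X : V, R X X = 0 := by
    intro X
    have h := hRalt X X
    have h2 : (2:ℝ) • R X X = 0 := by
      rw [two_smul]; nth_rewrite 2 [h]; simp
    have := smul_eq_zero.mp h2
    simpa using this
  have hli : LinearIndependent ℝ ![u, J u] := by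
    rw [LinearIndependent.pair_iff]
    intro s t hst
    have h1 : Ω (s • u + t • J u) (J u) = s := by
      simp [hu, hΩ (J u)]
    have h2 : Ω u (s • u + t • J u) = t := by
      simp [hu, hΩ u]
    rw [hst] at h1
    rw [hst] at h2
    simp at h1 h2
    exact ⟨h1.symm, h2.symm⟩
  have hcard : Fintype.card (Fin 2) = Module.finrank ℝ V := by simp [hdim]
  let b : Module.Basis (Fin 2) ℝ V := basisOfLinearIndependentOfCardEqFinrank hli hcard
  have hb0 : b 0 = u := by simp [b, coe_basisOfLinearIndependentOfCardEqFinrank]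
  have hb1 : b 1 = J u := by simp [b, coe_basisOfLinearIndependentOfCardEqFinrank]
  have hrep0 : ∀ s t : ℝ, b.repr (s • u + t • J u) 0 = s := by
    intro s t
    rw [← hb1, ← hb0]
    simp [Finsupp.single_apply]
  have hrep1 : ∀ s t : ℝ, b.repr (s • u + t • J u) 1 = t := by
    intro s t
    rw [← hb1, ← hb0]
    simp [Finsupp.single_apply]
  have hu0 : b.repr u 0 = 1 := by simpa using hrep0 1 0
  have hu1 : b.repr u 1 = 0 := by simpa using hrep1 1 0
  have hJu0 : b.repr (J u) 0 = 0 := by simpa using hrep0 0 1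
  have hJu1 : b.repr (J u) 1 = 1 := by simpa using hrep1 0 1
  set α := b.repr (R u (J u) u) 0 with hαdef
  set β := b.repr (R u (J u) u) 1 with hβdef
  have hAu : R u (J u) u = α • u + β • J u := by
    conv_lhs => rw [← b.sum_repr (R u (J u) u)]
    simp only [Fin.sum_univ_two, hb0, hb1, hαdef, hβdef]
  have hAJu : R u (J u) (J u) = -β • u + α • J u := by
    rw [hRJ, hAu]
    simp only [map_add, map_smul, hJ, smul_neg]
    module
  have htr : ∀ f : Module.End ℝ V,
      LinearMap.trace ℝ V f = b.repr (f u) 0 + b.repr (f (J u)) 1 := by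
    intro f
    rw [LinearMap.trace_eq_matrix_trace ℝ b, Matrix.trace]
    simp [Matrix.diag, LinearMap.toMatrix_apply, Fin.sum_univ_two, hb0, hb1]
  have hric : ∀ X Y : V, ricciOf R X Y = b.repr (R u X Y) 0 + b.repr (R (J u) X Y) 1 := by
    intro X Y
    rw [ricciOf, htr]
    simp [LinearMap.flip_apply]
  have hRuu : ricciOf R u u = -β := by
    rw [hric, hRself u, hRalt (J u) u]
    simp [hAu, hu1, hJu1]
  have hRuJu : ricciOf R u (J u) = -α := by
    rw [hric, hRself u, hRalt (J u) u]
    simp [hAJu, hu1, hJu1]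
  have hRJuu : ricciOf R (J u) u = α := by
    rw [hric, hRself (J u)]
    simp [hAu, hu0, hJu0]
  have hRJuJu : ricciOf R (J u) (J u) = -β := by
    rw [hric, hRself (J u)]
    simp [hAJu, hu0, hJu0]
  have hα : α = 0 := by
    have := hRicSym u (J u)
    rw [hRuJu, hRJuu] at this
    linarith
  have hA : ∀ Z : V, R u (J u) Z = β • J Z := by
    intro Z
    rw [← b.sum_repr Z]
    simp only [Fin.sum_univ_two, hb0, hb1, map_add, map_smul, hAu, hAJu, hα, hJ]
    module
  have hRXY : ∀ X Y : V, R X Y =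
      (b.repr X 0 * b.repr Y 1 - b.repr X 1 * b.repr Y 0) • R u (J u) := by
    intro X Y
    rw [← b.sum_repr X, ← b.sum_repr Y]
    simp only [Fin.sum_univ_two, hb0, hb1, map_add, map_smul, LinearMap.add_apply,
      LinearMap.smul_apply, hRself, hRalt (J u) u, hrep0, hrep1, Finsupp.add_apply,
      Finsupp.smul_apply, Pi.add_apply, Pi.smul_apply, hu0, hu1, hJu0, hJu1, smul_eq_mul]
    module
  refine ⟨?_, ?_, ?_, ?_, ?_⟩
  · rw [hAu, hα, hRuu]; module
  · rw [hRuu, hRJuJu]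
  · rw [hRuJu, hα, neg_zero]
  · rw [hRJuu, hα]
  · intro X Y Z
    have h1 : R X Y Z = (b.repr X 0 * b.repr Y 1 - b.repr X 1 * b.repr Y 0) • (β • J Z) := by
      rw [hRXY X Y]
      simp [hA]
    have h2 : ricciOf R X (J Y) = β * (b.repr X 0 * b.repr Y 1 - b.repr X 1 * b.repr Y 0) := by
      rw [hric]
      rw [hRXY u X, hRXY (J u) X]
      simp only [LinearMap.smul_apply, map_smul, Finsupp.smul_apply, hu0, hu1, hJu0, hJu1,
        hA (J Y), hJ Y, map_neg, map_smul, Finsupp.neg_apply, smul_eq_mul]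
      ring
    rw [h1, h2, smul_smul]
    ring_nf


end
end

section
/- With the setup of the product of surfaces and the (1,2)-tensor B̄ defined by B̄_u u = a u' + b J'u', B̄_u u' = s u + t Ju (extended symmetrically and by anti-commutation with J̄, with all other basic components zero), one has: [B̄,B̄]_{u,Ju}u = 2(bs-at)u + 2(as+bt)Ju, [B̄,B̄]_{u',J'u'}u' = 0, [B̄,B̄]_{u',J'u'}u = 2(s²+t²)Ju, [B̄,B̄]_{u,u'}u = (as+bt)u' + (bs-at)J'u', [B̄,B̄]_{u,u'}u' = -(s²+t²)u, and the trace form satisfies B̄caligraphic(u,u) := Tr(B̄_u B̄_u) = 4(as+bt), Tr(B̄_{u'}B̄_{u'}) = 2(s²+t²), Tr(B̄_u B̄_{u'}) = 0. -/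
/-! Statement 13: Components of `[B̄,B̄]` and of the trace form `𝓑(X,Y) = Tr(B̄_X B̄_Y)`
for the special (1,2)-tensor `B̄` on the product of two surfaces. -/

section
variable {V₁ V₂ : Type*} [AddCommGroup V₁] [Module ℝ V₁] [AddCommGroup V₂] [Module ℝ V₂]
  [FiniteDimensional ℝ V₁] [FiniteDimensional ℝ V₂]

/-- Inclusion of the first factor. -/
def iu (u : V₁) : V₁ × V₂ := (u, 0)

/-- Inclusion of the second factor. -/
def iv (v : V₂) : V₁ × V₂ := (0, v)

theorem product_Bbar_brackets_and_traces
    (J₁ : Module.End ℝ V₁) (J₂ : Module.End ℝ V₂)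
    (hJ₁ : ∀ X : V₁, J₁ (J₁ X) = -X) (hJ₂ : ∀ X : V₂, J₂ (J₂ X) = -X)
    (u : V₁) (u' : V₂) (a b s t : ℝ)
    (hdim : Module.finrank ℝ (V₁ × V₂) = 4)
    (hind : LinearIndependent ℝ
      ![(iu u : V₁ × V₂), iu (J₁ u), iv u', iv (J₂ u')])
    (B : (V₁ × V₂) →ₗ[ℝ] Module.End ℝ (V₁ × V₂))
    (hsym : ∀ X Y : V₁ × V₂, B X Y = B Y X)
    (h₁ : B (iu u) (iu u) = a • (iv u' : V₁ × V₂) + b • iv (J₂ u'))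
    (h₂ : B (iu (J₁ u)) (iu u) = b • (iv u' : V₁ × V₂) - a • iv (J₂ u'))
    (h₃ : B (iu (J₁ u)) (iu (J₁ u)) = -(a • (iv u' : V₁ × V₂) + b • iv (J₂ u')))
    (h₄ : B (iv u') (iv u') = 0)
    (h₅ : B (iv (J₂ u')) (iv u') = 0)
    (h₆ : B (iv u') (iv (J₂ u')) = 0)
    (h₇ : B (iv (J₂ u')) (iv (J₂ u')) = 0)
    (h₈ : B (iu u) (iv u') = s • (iu u : V₁ × V₂) + t • iu (J₁ u))
    (h₉ : B (iu (J₁ u)) (iv u') = t • (iu u : V₁ × V₂) - s • iu (J₁ u))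
    (h₁₀ : B (iu u) (iv (J₂ u')) = t • (iu u : V₁ × V₂) - s • iu (J₁ u))
    (h₁₁ : B (iu (J₁ u)) (iv (J₂ u')) = -(s • (iu u : V₁ × V₂) + t • iu (J₁ u))) :
    B (iu u) (B (iu (J₁ u)) (iu u)) - B (iu (J₁ u)) (B (iu u) (iu u)) =
        (2*(b*s - a*t)) • (iu u : V₁ × V₂) + (2*(a*s + b*t)) • iu (J₁ u) ∧
    B (iv u') (B (iv (J₂ u')) (iv u')) - B (iv (J₂ u')) (B (iv u') (iv u')) = 0 ∧
    B (iv u') (B (iv (J₂ u')) (iu u)) - B (iv (J₂ u')) (B (iv u') (iu u)) =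
        (2*(s^2 + t^2)) • (iu (J₁ u) : V₁ × V₂) ∧
    B (iu u) (B (iv u') (iu u)) - B (iv u') (B (iu u) (iu u)) =
        (a*s + b*t) • (iv u' : V₁ × V₂) + (b*s - a*t) • iv (J₂ u') ∧
    B (iu u) (B (iv u') (iv u')) - B (iv u') (B (iu u) (iv u')) =
        -((s^2 + t^2) • (iu u : V₁ × V₂)) ∧
    LinearMap.trace ℝ (V₁ × V₂) (B (iu u) * B (iu u)) = 4*(a*s + b*t) ∧
    LinearMap.trace ℝ (V₁ × V₂) (B (iv u') * B (iv u')) = 2*(s^2 + t^2) ∧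
    LinearMap.trace ℝ (V₁ × V₂) (B (iu u) * B (iv u')) = 0 := by
  have hB01 : B (iu u) (iu (J₁ u)) = b • (iv u' : V₁ × V₂) - a • iv (J₂ u') := by
    rw [hsym]; exact h₂
  have hB20 : B (iv u') (iu u) = s • (iu u : V₁ × V₂) + t • iu (J₁ u) := by
    rw [hsym]; exact h₈
  have hB21 : B (iv u') (iu (J₁ u)) = t • (iu u : V₁ × V₂) - s • iu (J₁ u) := by
    rw [hsym]; exact h₉
  have hB30 : B (iv (J₂ u')) (iu u) = t • (iu u : V₁ × V₂) - s • iu (J₁ u) := by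
    rw [hsym]; exact h₁₀
  have hB31 : B (iv (J₂ u')) (iu (J₁ u)) = -(s • (iu u : V₁ × V₂) + t • iu (J₁ u)) := by
    rw [hsym]; exact h₁₁
  have hB32 : B (iv (J₂ u')) (iv u') = 0 := h₅
  have hcard : Fintype.card (Fin 4) = Module.finrank ℝ (V₁ × V₂) := by
    simp [hdim]
  let bas : Module.Basis (Fin 4) ℝ (V₁ × V₂) := basisOfLinearIndependentOfCardEqFinrank hind hcard
  have hbas : ⇑bas = ![(iu u : V₁ × V₂), iu (J₁ u), iv u', iv (J₂ u')] :=
    coe_basisOfLinearIndependentOfCardEqFinrank hind hcard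
  have e0 : bas 0 = iu u := by rw [hbas]; rfl
  have e1 : bas 1 = iu (J₁ u) := by rw [hbas]; rfl
  have e2 : bas 2 = iv u' := by rw [hbas]; rfl
  have e3 : bas 3 = iv (J₂ u') := by rw [hbas]; rfl
  have htr : ∀ f : Module.End ℝ (V₁ × V₂),
      LinearMap.trace ℝ (V₁ × V₂) f = ∑ i, bas.repr (f (bas i)) i := by
    intro f
    rw [LinearMap.trace_eq_matrix_trace ℝ bas, Matrix.trace]
    simp [LinearMap.toMatrix_apply, Matrix.diag]
  refine ⟨?_, ?_, ?_, ?_, ?_, ?_, ?_, ?_⟩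
  · simp only [h₂, h₁, map_sub, map_add, map_smul, h₈, h₁₀, h₉, h₁₁]
    module
  · simp only [h₅, h₄, map_zero, sub_self]
  · simp only [hB30, hB20, map_sub, map_add, map_smul, hB20, hB21, hB30, hB31]
    module
  · simp only [hB20, h₁, map_add, map_smul, h₁, hB01, h₄, h₆]
    module
  · simp only [h₄, h₈, map_zero, map_add, map_smul, hB20, hB21]
    module
  · have F0 : B (iu u) (B (iu u) (bas 0)) = (a*s+b*t) • bas 0 + (a*t-b*s) • bas 1 := by
      simp only [e0, e1, h₁, map_add, map_smul, h₈, h₁₀]; module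
    have F1 : B (iu u) (B (iu u) (bas 1)) = (b*s-a*t) • bas 0 + (b*t+a*s) • bas 1 := by
      simp only [e0, e1, hB01, map_sub, map_smul, h₈, h₁₀]; module
    have F2 : B (iu u) (B (iu u) (bas 2)) = (s*a+t*b) • bas 2 + (s*b-t*a) • bas 3 := by
      simp only [e0, e1, e2, e3, h₈, map_add, map_smul, h₁, hB01]; module
    have F3 : B (iu u) (B (iu u) (bas 3)) = (t*a-s*b) • bas 2 + (t*b+s*a) • bas 3 := by
      simp only [e0, e1, e2, e3, h₁₀, map_sub, map_smul, h₁, hB01]; module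
    rw [htr, Fin.sum_univ_four]
    simp only [Module.End.mul_apply, F0, F1, F2, F3]
    simp [Finsupp.single_apply]
    ring
  · have F0 : B (iv u') (B (iv u') (bas 0)) = (s*s+t*t) • bas 0 + (0:ℝ) • bas 1 := by
      simp only [e0, e1, hB20, map_add, map_smul, hB20, hB21]; module
    have F1 : B (iv u') (B (iv u') (bas 1)) = (0:ℝ) • bas 0 + (t*t+s*s) • bas 1 := by
      simp only [e0, e1, hB21, map_sub, map_smul, hB20, hB21]; module
    have F2 : B (iv u') (B (iv u') (bas 2)) = 0 := by
      simp only [e2, h₄, map_zero]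
    have F3 : B (iv u') (B (iv u') (bas 3)) = 0 := by
      simp only [e3, h₆, map_zero]
    rw [htr, Fin.sum_univ_four]
    simp only [Module.End.mul_apply, F0, F1, F2, F3]
    simp [Finsupp.single_apply]
    ring
  · have F0 : B (iu u) (B (iv u') (bas 0)) = (s*a+t*b) • bas 2 + (s*b-t*a) • bas 3 := by
      simp only [e0, e2, e3, hB20, map_add, map_smul, h₁, hB01]; module
    have F1 : B (iu u) (B (iv u') (bas 1)) = (t*a-s*b) • bas 2 + (t*b+s*a) • bas 3 := by
      simp only [e1, e2, e3, hB21, map_sub, map_smul, h₁, hB01]; module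
    have F2 : B (iu u) (B (iv u') (bas 2)) = 0 := by
      simp only [e2, h₄, map_zero]
    have F3 : B (iu u) (B (iv u') (bas 3)) = 0 := by
      simp only [e3, h₆, map_zero]
    rw [htr, Fin.sum_univ_four]
    simp only [Module.End.mul_apply, F0, F1, F2, F3]
    simp [Finsupp.single_apply]

end
end

section
/- Let (M,J,∇,ξ) be a conical special complex manifold and for t ∈ ℝ define ∇ᵗ := e^{tJ} ∇ e^{-tJ}, where e^{tJ} = (cos t)Id + (sin t)J. Then ∇ᵗ = ∇ - (sin t)e^{tJ}(∇J), ∇ᵗ is a special connection, ∇ᵗξ = Id (so (M,J,∇ᵗ,ξ) is conical special complex), and moreover ∇ᵗJ = (Id + 2(sin t)e^{tJ}J)(∇J) so that the associated complex connection Dᵗ = ∇ᵗ - (1/2)J(∇ᵗJ) is independent of t: Dᵗ = D⁰ for all t. -/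
/-! Statement 16: For a conical special complex manifold and `∇ᵗ = e^{tJ} ∇ e^{-tJ}`:
`∇ᵗ = ∇ - (sin t) e^{tJ}(∇J)`, `∇ᵗ` is special, `∇ᵗξ = Id`,
`∇ᵗJ = (Id + 2(sin t) e^{tJ} J)(∇J)`, and `Dᵗ = D⁰` for all `t`. -/

section
variable {V : Type*} [LieRing V] [LieAlgebra ℝ V]

/-- `e^{tJ} = (cos t) Id + (sin t) J`. -/
noncomputable def expJ (J : V →ₗ[ℝ] V) (t : ℝ) (X : V) : V :=
  Real.cos t • X + Real.sin t • J X

theorem conical_family_of_special_connections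
    (nabla : V → V → V) (J : V →ₗ[ℝ] V) (xi : V)
    (hlin1 : ∀ (r : ℝ) (X Y Z : V), nabla (r • X + Y) Z = r • nabla X Z + nabla Y Z)
    (hlin2 : ∀ (r : ℝ) (X Y Z : V), nabla X (r • Y + Z) = r • nabla X Y + nabla X Z)
    (hJ : ∀ X : V, J (J X) = -X)
    (hTF : IsTorsionFree nabla)
    (hflat : ∀ X Y Z : V, curvOf nabla X Y Z = 0)
    (A : V → V → V) (hA : ∀ X Y : V, A X Y = nabla X (J Y) - J (nabla X Y))
    (hAsym : ∀ X Y : V, A X Y = A Y X)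
    (hxi : ∀ X : V, nabla X xi = X)
    (hAxi : ∀ Y : V, A xi Y = 0)                         -- ∇_ξ J = 0
    (t : ℝ)
    (nablat : V → V → V)
    (hnt : ∀ X Y : V, nablat X Y = expJ J t (nabla X (expJ J (-t) Y))) :
    (∀ X Y : V, nablat X Y = nabla X Y - Real.sin t • expJ J t (A X Y)) ∧
    (IsTorsionFree nablat ∧ (∀ X Y Z : V, curvOf nablat X Y Z = 0) ∧
      (∀ X Y : V, nablat X (J Y) - J (nablat X Y) = nablat Y (J X) - J (nablat Y X))) ∧
    (∀ X : V, nablat X xi = X) ∧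
    (∀ X Y : V, nablat X (J Y) - J (nablat X Y)
        = A X Y + (2 * Real.sin t) • expJ J t (J (A X Y))) ∧
    (∀ X Y : V, nablat X Y - (1/2 : ℝ) • J (nablat X (J Y) - J (nablat X Y))
        = nabla X Y - (1/2 : ℝ) • J (A X Y)) := by
  have hzero : ∀ X : V, nabla X 0 = 0 := by
    intro X
    have h := hlin2 (-1) X 0 0
    simpa using h
  have hsmul : ∀ (r : ℝ) (X Y : V), nabla X (r • Y) = r • nabla X Y := by
    intro r X Y
    have h := hlin2 r X Y 0
    simpa [hzero] using h
  have hneg : ∀ (X Y : V), nabla X (-Y) = - nabla X Y := by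
    intro X Y
    have h := hsmul (-1) X Y
    simpa using h
  set c := Real.cos t with hc
  set s := Real.sin t with hs
  have hcs : c ^ 2 + s ^ 2 = 1 := by rw [hc, hs]; exact Real.cos_sq_add_sin_sq t
  have he : ∀ Y : V, expJ J t Y = c • Y + s • J Y := fun Y => rfl
  have hen : ∀ Y : V, expJ J (-t) Y = c • Y - s • J Y := by
    intro Y
    simp [expJ, Real.cos_neg, Real.sin_neg, sub_eq_add_neg, ← hc, ← hs]
  have hnab : ∀ X Y : V, nabla X (expJ J (-t) Y) = c • nabla X Y - s • nabla X (J Y) := by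
    intro X Y
    rw [hen, sub_eq_add_neg, ← neg_smul, hlin2 c X Y ((-s) • J Y), hsmul]
    simp [sub_eq_add_neg, neg_smul]
  have hform : ∀ X Y : V, nablat X Y = nabla X Y - s • expJ J t (A X Y) := by
    intro X Y
    rw [hnt, hnab, hA, he, he]
    simp only [map_sub, map_smul, map_add, hJ, smul_sub, smul_add, smul_neg, smul_smul]
    match_scalars <;> (try ring) <;> linarith [hcs]
  have hAJ : ∀ X Y : V, A X (J Y) = - J (A X Y) := by
    intro X Y
    rw [hA, hA, hJ, hneg]
    simp only [map_sub, hJ]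
    abel
  have h4 : ∀ X Y : V, nablat X (J Y) - J (nablat X Y)
      = A X Y + (2 * s) • expJ J t (J (A X Y)) := by
    intro X Y
    rw [hform, hform, hAJ]
    simp only [hA, he, map_sub, map_add, map_smul, map_neg, hJ, smul_sub, smul_add, smul_neg,
      smul_smul]
    match_scalars <;> ring
  refine ⟨hform, ⟨?_, ?_, ?_⟩, ?_, h4, ?_⟩
  · -- torsion-free
    intro X Y
    rw [hform, hform, ← hAsym X Y, sub_sub_sub_cancel_right]
    exact hTF X Y
  · -- flat
    intro X Y Z
    have hinv : ∀ W : V, expJ J (-t) (expJ J t W) = W := by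
      intro W
      rw [he, hen]
      simp only [map_add, map_smul, hJ, smul_add, smul_smul, smul_neg]
      match_scalars <;> (try ring) <;> linarith [hcs]
    simp only [curvOf, hnt, hinv]
    have hcurv := hflat X Y (expJ J (-t) Z)
    simp only [curvOf] at hcurv
    rw [sub_sub, sub_eq_zero] at hcurv
    rw [hcurv, he, he, he]
    simp only [map_add, smul_add]
    abel
  · -- symmetry of A^t
    intro X Y
    rw [h4, h4, hAsym X Y]
  · -- nablat xi = id
    intro X
    have hJxi : nabla X (J xi) = J X := by
      have h1 := hA X xi
      rw [hAsym X xi, hAxi X, hxi X] at h1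
      exact sub_eq_zero.mp h1.symm
    rw [hnt, hnab, hxi, hJxi, he]
    simp only [map_sub, map_smul, hJ, smul_sub, smul_smul, smul_neg]
    match_scalars <;> (try ring) <;> linarith [hcs]
  · -- D^t = D^0
    intro X Y
    rw [h4, hform]
    simp only [hA, he, map_add, map_smul, map_sub, map_neg, hJ, smul_add, smul_sub, smul_neg,
      smul_smul]
    match_scalars <;> ring


end
end

section
/- Let (M,J,∇,ξ) be a conical special complex manifold whose ℂ*-quotient is the projective special complex manifold (M̄,J̄) of dimension 2n ≥ 4, with canonical c-projective structure represented by D^{(ω)}. If W^Q = 0 for the quaternionic structure Q = ⟨I₁,I₂,I₃⟩ on TM, then the c-projective Weyl tensor of M̄ vanishes, W^{P̄(π)} = 0, and the trace form 𝓑 (𝓑(Y,Z) = Tr(B̄_Y B̄_Z)) vanishes. The key algebraic step: if an End-valued 2-form W with Tr W_{(·),Y}Z = 0 satisfies W_{X,Y}Z = -(1/(4(n+1)))𝓑_{J̄}(X,Y)J̄Z + (1/(8(n+1)))(𝓑(X,Z)Y - 𝓑(Y,Z)X) - (1/(8(n+1)))(𝓑_{J̄}(X,Z)J̄Y - 𝓑_{J̄}(Y,Z)J̄X)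 for a symmetric J̄-Hermitian (0,2)-tensor 𝓑, then taking the trace over X gives 0 = (1/4)𝓑(Y,Z), hence 𝓑 = 0 and W = 0. -/
/-! Statement 17 (key algebraic step of Theorem flatness_q_c): if a trace-free
`End`-valued 2-form `W` satisfies
`W_{X,Y}Z = -(1/(4(n+1)))𝓑_{J}(X,Y)JZ + (1/(8(n+1)))(𝓑(X,Z)Y - 𝓑(Y,Z)X)
  - (1/(8(n+1)))(𝓑(X,JZ)JY - 𝓑(Y,JZ)JX)`
for a symmetric `J`-Hermitian (0,2)-tensor `𝓑`, then `𝓑 = 0` and `W = 0`. -/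

section
variable {V : Type*} [AddCommGroup V] [Module ℝ V] [FiniteDimensional ℝ V]

lemma trace_smulRight' (f : V →ₗ[ℝ] ℝ) (v : V) :
    LinearMap.trace ℝ V (f.smulRight v) = f v := by
  have h : f.smulRight v = dualTensorHom ℝ V V (f ⊗ₜ v) := by ext x; simp
  rw [h, LinearMap.trace_eq_contract_apply]; simp

theorem flat_quaternionic_implies_weyl_vanishes
    (n : ℕ) (hn : 2 ≤ n) (hdim : Module.finrank ℝ V = 2*n)
    (J : Module.End ℝ V) (hJ : ∀ X : V, J (J X) = -X)
    (𝓑 : V →ₗ[ℝ] V →ₗ[ℝ] ℝ)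
    (hsym : ∀ X Y : V, 𝓑 X Y = 𝓑 Y X)
    (hherm : ∀ X Y : V, 𝓑 (J X) (J Y) = 𝓑 X Y)
    (W : V →ₗ[ℝ] V →ₗ[ℝ] Module.End ℝ V)
    (hW : ∀ X Y Z : V, W X Y Z =
        -((1/(4*((n : ℝ)+1))) * 𝓑 X (J Y)) • J Z
        + (1/(8*((n : ℝ)+1))) • ((𝓑 X Z) • Y - (𝓑 Y Z) • X)
        - (1/(8*((n : ℝ)+1))) • ((𝓑 X (J Z)) • J Y - (𝓑 Y (J Z)) • J X))
    -- the c-projective Weyl tensor is trace-free: `Tr W_{(·),Y}Z = 0`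
    (hTr : ∀ Y Z : V,
        LinearMap.trace ℝ V ((LinearMap.applyₗ Z).comp (W.flip Y)) = 0) :
    (∀ X Y : V, 𝓑 X Y = 0) ∧ W = 0 := by
  obtain ⟨c, hc⟩ : ∃ c : ℝ, c = 1/(4*((n : ℝ)+1)) := ⟨_, rfl⟩
  obtain ⟨d, hd⟩ : ∃ d : ℝ, d = 1/(8*((n : ℝ)+1)) := ⟨_, rfl⟩
  obtain ⟨t, ht⟩ : ∃ t : ℝ, t = LinearMap.trace ℝ V J := ⟨_, rfl⟩
  have hen : ((n : ℝ)+1) ≠ 0 := by positivity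
  simp only [← hc, ← hd] at hW
  have hcd : c + d * (2*(n:ℝ)) = 1/4 := by rw [hc, hd]; field_simp; ring
  -- compute the trace of X ↦ W X Y Z
  have key : ∀ Y Z : V, -(1/4) * 𝓑 Y Z + (d * t) * 𝓑 Y (J Z) = 0 := by
    intro Y Z
    have hL : (LinearMap.applyₗ Z).comp (W.flip Y) =
        (-c) • ((𝓑.flip (J Y)).smulRight (J Z))
        + d • ((𝓑.flip Z).smulRight Y)
        - (d * 𝓑 Y Z) • (LinearMap.id : V →ₗ[ℝ] V)
        - d • ((𝓑.flip (J Z)).smulRight (J Y))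
        + (d * 𝓑 Y (J Z)) • J := by
      ext X
      simp only [LinearMap.comp_apply, LinearMap.flip_apply, LinearMap.applyₗ_apply_apply,
        LinearMap.add_apply, LinearMap.sub_apply, LinearMap.smul_apply,
        LinearMap.smulRight_apply, LinearMap.id_apply, hW X Y Z]
      module
    have h0 := hTr Y Z
    rw [hL] at h0
    simp only [map_add, map_sub, map_smul, trace_smulRight', LinearMap.trace_id,
      LinearMap.flip_apply, hdim, ← ht] at h0
    rw [hherm, hherm, hsym Z Y] at h0
    have hcast : ((2*n : ℕ) : ℝ) = 2*(n:ℝ) := by push_cast; ring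
    simp only [smul_eq_mul, hcast] at h0
    linear_combination h0 + 𝓑 Y Z * hcd
  -- from the trace identity deduce 𝓑 = 0
  have hB : ∀ X Y : V, 𝓑 X Y = 0 := by
    intro Y Z
    have h1 := key Y Z
    have h2 := key Y (J Z)
    rw [hJ Z, map_neg] at h2
    have h3 : (1 + 16*(d*t)^2) * 𝓑 Y Z = 0 := by
      linear_combination (-4)*h1 + (-16*(d*t))*h2
    have hpos : (1 + 16*(d*t)^2) ≠ 0 := by positivity
    exact (mul_eq_zero.mp h3).resolve_left hpos
  refine ⟨hB, ?_⟩
  ext X Y Z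
  simp [hW X Y Z, hB]

end
end
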